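/- arXiv:2309.13762 — 2 statements merged into one kernel-verified Lean document; each statement's English description precedes it below -/
import Mathlib

section
/- Let P and Q be a version pair with edit set δ, and let θ and θ′ be decompositions of the pair with θ contained in θ′. If every covering window in θ is equivalent, then every covering window in θ′ is also equivalent (and hence the version pair is equivalent). -/
/-!
Every window of `θ'` is a union of blocks of `θ`: the block of `θ` through a point lies in some
window of `θ'`, and disjointness of the windows forces that window to be the one through the
point. So a covering window of `θ'` contains the covering block of `θ` through one of its edits,
and equivalence passes from that block to the window by monotonicity.
-/

open Set

section Refinement

variable {V : Type*} {θ θ' : Set (Set V)}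

theorem subset_of_mem_of_refines (hθ' : θ'.PairwiseDisjoint id)
    (hcont : ∀ b ∈ θ, ∃ b' ∈ θ', b ⊆ b') {b b' : Set V} (hb : b ∈ θ) (hb' : b' ∈ θ')
    {e : V} (heb : e ∈ b) (heb' : e ∈ b') : b ⊆ b' := by
  obtain ⟨b'', hb'', hsub⟩ := hcont b hb
  rwa [hθ'.elim_set hb'' hb' e (hsub heb) heb'] at hsub

theorem exists_mem_subset_of_refines (hθ : ⋃₀ θ = univ) (hθ' : θ'.PairwiseDisjoint id)
    (hcont : ∀ b ∈ θ, ∃ b' ∈ θ', b ⊆ b') {b' : Set V} (hb' : b' ∈ θ') {e : V} (he : e ∈ b') :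
    ∃ b ∈ θ, e ∈ b ∧ b ⊆ b' := by
  obtain ⟨b, hb, heb⟩ : e ∈ ⋃₀ θ := hθ ▸ mem_univ e
  exact ⟨b, hb, heb, subset_of_mem_of_refines hθ' hcont hb hb' heb he⟩

theorem forall_meeting_of_refines {P : Set V → Prop} (hP : Monotone P) {S : Set V}
    (hθ : ⋃₀ θ = univ) (hθ' : θ'.PairwiseDisjoint id) (hcont : ∀ b ∈ θ, ∃ b' ∈ θ', b ⊆ b')
    (hθP : ∀ b ∈ θ, (∃ e ∈ S, e ∈ b) → P b) :
    ∀ b' ∈ θ', (∃ e ∈ S, e ∈ b') → P b' := by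
  rintro b' hb' ⟨e, heS, heb'⟩
  obtain ⟨b, hb, heb, hsub⟩ := exists_mem_subset_of_refines hθ hθ' hcont hb' heb'
  exact hP hsub (hθP b hb ⟨e, heS, heb⟩)

end Refinement

theorem decomposition_containment_preserves_equivalence_general
    {V : Type*} (θ θ' : Set (Set V)) (edits : Set V)
    (equivWin : Set V → Prop) (pairEquiv : Prop)
    -- θ is a decomposition (a partition of the operator set)
    (hθ_cov : ⋃₀ θ = Set.univ)
    -- θ' is a decomposition (a partition of the operator set)
    (hθ'_disj : ∀ b ∈ θ', ∀ c ∈ θ', b ≠ c → Disjoint b c)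
    -- θ is contained in θ'
    (hcont : ∀ b ∈ θ, ∃ b' ∈ θ', b ⊆ b')
    -- window containment preserves equivalence (Lemma 2)
    (hmono : ∀ s t : Set V, s ⊆ t → equivWin s → equivWin t)
    -- every covering window of θ is equivalent
    (hθ_equiv : ∀ b ∈ θ, (∃ e ∈ edits, e ∈ b) → equivWin b)
    -- decomposition lemma (Lemma 3): all covering windows equivalent ⇒ pair equivalent
    (hlemma : (∀ b' ∈ θ', (∃ e ∈ edits, e ∈ b') → equivWin b') → pairEquiv) :
    (∀ b' ∈ θ', (∃ e ∈ edits, e ∈ b') → equivWin b') ∧ pairEquiv := by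
  have hcovering : ∀ b' ∈ θ', (∃ e ∈ edits, e ∈ b') → equivWin b' :=
    forall_meeting_of_refines (fun s t => hmono s t) hθ_cov hθ'_disj hcont hθ_equiv
  exact ⟨hcovering, hlemma hcovering⟩

/-- Lemma 4 of the paper.  Decompositions of a version pair are modeled as
partitions of the (common, mapped) operator set `V` into windows (blocks).
`edits` is the set of edited operators; a window is *covering* if it contains
an edit.  `equivWin s` says the window (pair of sub-DAGs) induced by the
operator set `s` is equivalent; by Lemma 2 (window containment preserves
equivalence) equivalence is monotone under window containment.  `pairEquiv`
is the statement that the version pair is equivalent; by Lemma 3 it follows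
once some decomposition has all covering windows equivalent.

Claim: if a decomposition `θ` is contained in a decomposition `θ'`
(every window of `θ` is contained in some window of `θ'`) and every covering
window of `θ` is equivalent, then every covering window of `θ'` is also
equivalent (and hence the version pair is equivalent). -/
theorem decomposition_containment_preserves_equivalence
    {V : Type*} (θ θ' : Set (Set V)) (edits : Set V)
    (equivWin : Set V → Prop) (pairEquiv : Prop)
    -- θ is a decomposition (a partition of the operator set)
    (hθ_ne : ∀ b ∈ θ, b.Nonempty)
    (hθ_disj : ∀ b ∈ θ, ∀ c ∈ θ, b ≠ c → Disjoint b c)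
    (hθ_cov : ⋃₀ θ = Set.univ)
    -- θ' is a decomposition (a partition of the operator set)
    (hθ'_ne : ∀ b ∈ θ', b.Nonempty)
    (hθ'_disj : ∀ b ∈ θ', ∀ c ∈ θ', b ≠ c → Disjoint b c)
    (hθ'_cov : ⋃₀ θ' = Set.univ)
    -- θ is contained in θ'
    (hcont : ∀ b ∈ θ, ∃ b' ∈ θ', b ⊆ b')
    -- window containment preserves equivalence (Lemma 2)
    (hmono : ∀ s t : Set V, s ⊆ t → equivWin s → equivWin t)
    -- every covering window of θ is equivalent
    (hθ_equiv : ∀ b ∈ θ, (∃ e ∈ edits, e ∈ b) → equivWin b)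
    -- decomposition lemma (Lemma 3): all covering windows equivalent ⇒ pair equivalent
    (hlemma : (∀ b' ∈ θ', (∃ e ∈ edits, e ∈ b') → equivWin b') → pairEquiv) :
    (∀ b' ∈ θ', (∃ e ∈ edits, e ∈ b') → equivWin b') ∧ pairEquiv :=
  decomposition_containment_preserves_equivalence_general θ θ' edits equivWin pairEquiv hθ_cov
    hθ'_disj hcont hmono hθ_equiv hlemma
end

section
/- Equivalence of windows is not preserved under overlapping windows: there exist two dataflow versions P and Q with multiple edits, and two overlapping windows ω and ω′ (each a covering window of some edits), such that ω is equivalent and ω′ is equivalent, yet the version pair P and Q is not equivalent. -/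
/-- Overlapping windows do not preserve equivalence (composed-function model
of a linear dataflow).  There exist two versions `P = c ∘ b ∘ a` and
`Q = c' ∘ b' ∘ a'` (compositions of deterministic stage functions, obtained
from each other by multiple edits) and two overlapping covering windows:
`ω = (b ∘ a, b' ∘ a')` covering the first edits and `ω' = (c ∘ b, c' ∘ b')`
covering the last edits, which share the middle operator `b`/`b'`.  Both
windows are equivalent (their sub-DAGs agree on every instance of their
input sources), yet the version pair is not equivalent: some instance of the
data sources produces different sink results. -/
theorem overlapping_windows_do_not_imply_pair_equiv :
    ∃ (α : Type) (a b c a' b' c' : α → α),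
      (∀ x, b (a x) = b' (a' x)) ∧         -- window ω is equivalent
      (∀ x, c (b x) = c' (b' x)) ∧         -- window ω' is equivalent
      (∃ x, c (b (a x)) ≠ c' (b' (a' x))) -- but the version pair is not
      := by
  -- P = not ∘ id ∘ id and Q = id ∘ not ∘ not. Counting negations, ω compares 0 with 2 and ω'
  -- compares 1 with 1, so both agree up to parity; the shared middle stage is negated only in Q,
  -- which leaves P with one negation against two in Q.
  exact ⟨Bool, id, id, not, not, not, id, fun x => (Bool.not_not x).symm, fun _ => rfl,
    true, Bool.not_ne_self true⟩
end
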